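/- Let ξ = [0; ε₁/a₁, …, ε_l/a_l] be a rational number in (0,1), written as the mediant ξ = x ⊕ y of the two consecutive elements x < y of the Stern–Brocot sequence 𝔉_n between which it first appears, and let ξ^l = x ⊕ ξ and ξ^r = ξ ⊕ y be its two successors. If a_l = 1 then S⁰(ξ^l) − S⁰(ξ) = 1 and S⁰(ξ^r) − S⁰(ξ) = 1 (ξ is a node of the first type); if a_l > 1 then one of S⁰(ξ^l) − S⁰(ξ), S⁰(ξ^r) − S⁰(ξ) equals 1 and the other equals 2 (ξ is a node of the second type). Concretely, if a_l = 1 then {ξ^l, ξ^r} = {[0; ε₁/a₁, …, ε_{l−1}/(a_{l−1}+2)], [0; ε₁/a₁, …, ε_l/a_l, 1/1]}, and if a_l > 1 then {ξ^l, ξ^r} = {[0; ε₁/a₁, …, ε_l/a_l, 1/1], [0; ε₁/a₁, …, ε_l/a_l, −1/1, 1/1]}. -/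

import Mathlib

open Filter Topology

noncomputable section

/-- Evaluation of a list of (sign, partial quotient) pairs as the continued
fraction `ε₁ / (a₁ + ε₂ / (a₂ + ⋯ + ε_l / a_l))`; the empty list evaluates to `0`. -/
def ocfEval : List (ℤ × ℕ) → ℚ
  | [] => 0
  | (e, a) :: t => (e : ℚ) / ((a : ℚ) + ocfEval t)

/-- Structural validity of a list of (sign, partial quotient) pairs for an odd
continued fraction: all partial quotients are odd positive integers, all signs
are `±1`, `a_j + ε_{j+1} ≥ 2` for consecutive terms, and the last sign is `1`
whenever the last partial quotient is `1`. -/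
def ocfValid : List (ℤ × ℕ) → Prop
  | [] => True
  | [(e, a)] => (e = 1 ∨ e = -1) ∧ Odd a ∧ 0 < a ∧ (a = 1 → e = 1)
  | (e, a) :: (e', a') :: t =>
      (e = 1 ∨ e = -1) ∧ Odd a ∧ 0 < a ∧ 2 ≤ (a : ℤ) + e' ∧ ocfValid ((e', a') :: t)

/-- `L` is a zero-based odd continued fraction expansion of the rational `x`,
i.e. `x = [0; ε₁/a₁, …, ε_l/a_l]` with first sign `ε₁ = 1`. -/
def ZeroRep (x : ℚ) (L : List (ℤ × ℕ)) : Prop :=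
  ocfValid L ∧ (∀ e a t, L = (e, a) :: t → e = 1) ∧ x = ocfEval L

/-- `L` is an odd continued fraction expansion of the rational `x`,
i.e. `x = [1; ε₁/a₁, …, ε_l/a_l] = 1 + ε₁/(a₁ + ⋯)` with first sign `ε₁ = -1`. -/
def OneRep (x : ℚ) (L : List (ℤ × ℕ)) : Prop :=
  ocfValid L ∧ (∀ e a t, L = (e, a) :: t → e = -1) ∧ x = 1 + ocfEval L

/-- Sum of the partial quotients of a list. -/
def qsum (L : List (ℤ × ℕ)) : ℕ := (L.map Prod.snd).sum

/-- `Sone x`: the sum of the partial quotients of the odd continued fraction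
expansion `x = [1; ε₁/a₁, …, ε_l/a_l]` of a rational `x`. -/
def Sone (x : ℚ) : ℕ := sInf (qsum '' {L | OneRep x L})

/-- `Szero x`: the sum of the partial quotients of the zero-based odd continued
fraction expansion `x = [0; ε₁/a₁, …, ε_l/a_l]` of a rational `x`. -/
def Szero (x : ℚ) : ℕ := sInf (qsum '' {L | ZeroRep x L})

/-- `Mset n = {x ∈ ℚ ∩ [0,1] : S(x) ≤ n + 1}`. -/
def Mset (n : ℕ) : Set ℚ := {x | 0 ≤ x ∧ x ≤ 1 ∧ Sone x ≤ n + 1}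

/-- `Yset n = 𝒴_n = {x ∈ ℚ ∩ [0,1] : S⁰(x) ≤ n + 1}`. -/
def Yset (n : ℕ) : Set ℚ := {x | 0 ≤ x ∧ x ≤ 1 ∧ Szero x ≤ n + 1}

/-- `Xset k = 𝒳_k = {x ∈ ℚ ∩ [0,1] : S⁰(x) = k + 1}`. -/
def Xset (k : ℕ) : Set ℚ := {x | 0 ≤ x ∧ x ≤ 1 ∧ Szero x = k + 1}

/-- `Y_n`, the cardinality of `𝒴_n`. -/
def Ycard (n : ℕ) : ℕ := (Yset n).ncard

/-- `X_k`, the cardinality of `𝒳_k`. -/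
def Xcard (k : ℕ) : ℕ := (Xset k).ncard

/-- `Z_n = Y_{n+1} - Y_n - 1`. -/
def Zcard (n : ℕ) : ℤ := (Ycard (n + 1) : ℤ) - (Ycard n : ℤ) - 1

/-- The distribution function `F_n(x) = #{ξ ∈ M_n : ξ ≤ x} / #M_n`. -/
def Fn (n : ℕ) (x : ℝ) : ℝ :=
  ((Mset n ∩ {ξ : ℚ | (ξ : ℝ) ≤ x}).ncard : ℝ) / ((Mset n).ncard : ℝ)

/-- The distribution function `F⁰_n(x) = #{ξ ∈ 𝒴_n : ξ ≤ x} / Y_n`. -/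
def F0n (n : ℕ) (x : ℝ) : ℝ :=
  ((Yset n ∩ {ξ : ℚ | (ξ : ℝ) ≤ x}).ncard : ℝ) / (Ycard n : ℝ)

/-- The limit distribution function `F(x) = lim_{n → ∞} F_n(x)`. -/
def F (x : ℝ) : ℝ := limUnder atTop fun n => Fn n x

/-- The limit distribution function `F⁰(x) = lim_{n → ∞} F⁰_n(x)`. -/
def F0 (x : ℝ) : ℝ := limUnder atTop fun n => F0n n x

/-- The mediant `(a + c) / (b + d)` of two rationals `a/b`, `c/d` in lowest terms. -/
def mediant (x y : ℚ) : ℚ := ((x.num + y.num : ℤ) : ℚ) / ((x.den + y.den : ℕ) : ℚ)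

/-- The Stern–Brocot sequences: `𝔉₀ = {0, 1}` and `𝔉_{n+1}` is obtained from
`𝔉_n` by inserting the mediant of every pair of consecutive elements of `𝔉_n`. -/
def SB : ℕ → Set ℚ
  | 0 => {0, 1}
  | n + 1 => SB n ∪ {z | ∃ x y, x ∈ SB n ∧ y ∈ SB n ∧ x < y ∧
      (∀ t ∈ SB n, t ≤ x ∨ y ≤ t) ∧ z = mediant x y}

/-- `x < y` are consecutive elements of the Stern–Brocot sequence `𝔉_n`. -/
def SBConsecutive (n : ℕ) (x y : ℚ) : Prop :=
  x ∈ SB n ∧ y ∈ SB n ∧ x < y ∧ ∀ t ∈ SB n, t ≤ x ∨ y ≤ t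

/-- Evaluation of an ordinary continued fraction `[0; b₁, …, b_l] = 1/(b₁ + 1/(b₂ + ⋯))`. -/
def cfEval : List ℕ → ℚ
  | [] => 0
  | b :: t => 1 / ((b : ℚ) + cfEval t)


/-!
Write `ξ = B / D`, where `!![A, B; C, D]` is the product of the matrices `!![0, εᵢ; 1, aᵢ]`.
This matrix is unimodular, and validity of the expansion together with `0 < ξ < 1` forces
`0 < C < D`; hence `ξ` is the mediant of the Farey neighbours `A / C` and `(B - A) / (D - C)`.
Consecutive elements of a Stern–Brocot sequence are Farey neighbours, and a fraction is the mediant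
of at most one such pair, so these are `x` and `y`, in an order fixed by the sign of the
determinant. The successors of `ξ` are then `(A + B) / (C + D)`, whose expansion is that of `ξ`
followed by `1/1`, and `(2B - A) / (2D - C)`, whose expansion is that of `ξ` followed by
`-1/1, 1/1` when `a_l > 1`, and that of `ξ` with the final `1/1` dropped and `a_{l-1}` raised by
`2` when `a_l = 1`. Expansions are unique, so `S⁰` of each successor is read off from them.
-/

theorem ocfValid.head {e : ℤ} {a : ℕ} {t : List (ℤ × ℕ)} (h : ocfValid ((e, a) :: t)) :
    (e = 1 ∨ e = -1) ∧ Odd a ∧ 0 < a := by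
  rcases t with _ | ⟨⟨f, b⟩, t⟩
  exacts [⟨h.1, h.2.1, h.2.2.1⟩, ⟨h.1, h.2.1, h.2.2.1⟩]

theorem ocfValid.tail {e : ℤ} {a : ℕ} {t : List (ℤ × ℕ)} (h : ocfValid ((e, a) :: t)) :
    ocfValid t := by
  rcases t with _ | ⟨⟨f, b⟩, t⟩
  exacts [trivial, h.2.2.2.2]

theorem ocfValid.of_append {L M : List (ℤ × ℕ)} (h : ocfValid (L ++ M)) : ocfValid M := by
  induction L with
  | nil => exact h
  | cons p L ih => exact ih (ocfValid.tail (e := p.1) (a := p.2) h)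

/-- An entry constrains its neighbours only through its sign. -/
theorem ocfValid.splice {L M N : List (ℤ × ℕ)} {e : ℤ} {a b : ℕ}
    (h : ocfValid (L ++ (e, a) :: M)) (h' : ocfValid ((e, b) :: N)) :
    ocfValid (L ++ (e, b) :: N) := by
  induction L with
  | nil => exact h'
  | cons p L ih =>
    obtain ⟨g, c⟩ := p
    rcases L with _ | ⟨⟨g', c'⟩, L⟩
    · exact ⟨h.1, h.2.1, h.2.2.1, h.2.2.2.1, h'⟩
    · exact ⟨h.1, h.2.1, h.2.2.1, h.2.2.2.1, ih h.2.2.2.2⟩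

theorem ocfValid_one_one : ocfValid [(1, 1)] := ⟨Or.inl rfl, odd_one, one_pos, fun _ => rfl⟩

theorem ocfValid.one_le_add_ocfEval {e : ℤ} {a : ℕ} {t : List (ℤ × ℕ)}
    (h : ocfValid ((e, a) :: t)) :
    1 ≤ (a : ℚ) + ocfEval t ∧ (e = -1 → 1 < (a : ℚ) + ocfEval t) := by
  induction t generalizing e a with
  | nil =>
    have ha : (1 : ℚ) ≤ a := by exact_mod_cast h.2.2.1
    refine ⟨by simpa [ocfEval] using ha, fun he => ?_⟩
    have ha1 : a ≠ 1 := fun ha1 => by simpa [he] using h.2.2.2 ha1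
    obtain ⟨k, rfl⟩ := h.2.1
    have : (3 : ℚ) ≤ (2 * k + 1 : ℕ) := by norm_cast; omega
    simp only [ocfEval]; linarith
  | cons p t ih =>
    obtain ⟨f, b⟩ := p
    obtain ⟨hb, hb'⟩ := ih h.2.2.2.2
    have ha : (1 : ℚ) ≤ a := by exact_mod_cast h.2.2.1
    have hlink : 2 ≤ (a : ℤ) + f := h.2.2.2.1
    rcases h.2.2.2.2.head.1 with rfl | rfl
    · have : 0 < ocfEval ((1, b) :: t) := by simp only [ocfEval]; positivity
      constructor <;> intros <;> linarith
    · have ha3 : (3 : ℚ) ≤ a := by exact_mod_cast (by omega : 3 ≤ a)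
      have : -1 < ocfEval ((-1, b) :: t) := by
        simp only [ocfEval]
        push_cast
        rw [neg_div, neg_lt_neg_iff, div_lt_one (by linarith)]
        exact hb' rfl
      constructor <;> intros <;> linarith

theorem ocfValid.sign_mul_ocfEval_pos {e : ℤ} {a : ℕ} {t : List (ℤ × ℕ)}
    (h : ocfValid ((e, a) :: t)) : 0 < (e : ℚ) * ocfEval ((e, a) :: t) := by
  have hpos : 0 < (a : ℚ) + ocfEval t := by linarith [h.one_le_add_ocfEval.1]
  have he : (e : ℚ) * e = 1 := by rcases h.head.1 with rfl | rfl <;> norm_num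
  rw [ocfEval, mul_div_assoc', he]
  positivity

theorem ocfValid.ocfEval_mem_Ioc {L : List (ℤ × ℕ)} (h : ocfValid L) :
    ocfEval L ∈ Set.Ioc (-1) 1 := by
  rcases L with _ | ⟨⟨e, a⟩, t⟩
  · simp [ocfEval]
  · obtain ⟨h1, h1'⟩ := h.one_le_add_ocfEval
    have hpos : (0 : ℚ) < 1 / ((a : ℚ) + ocfEval t) := by
      have : (0 : ℚ) < (a : ℚ) + ocfEval t := by linarith
      positivity
    simp only [ocfEval, Set.mem_Ioc]
    rcases h.head.1 with rfl | rfl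
    · push_cast
      exact ⟨by linarith, by rw [div_le_one (by linarith)]; exact h1⟩
    · push_cast
      rw [neg_div, neg_lt_neg_iff, div_lt_one (by linarith)]
      exact ⟨h1' rfl, by linarith⟩

theorem ocfValid.eq_of_ocfEval_eq {L M : List (ℤ × ℕ)} (hL : ocfValid L) (hM : ocfValid M)
    (h : ocfEval L = ocfEval M) : L = M := by
  induction L generalizing M with
  | nil =>
    rcases M with _ | ⟨⟨f, b⟩, u⟩
    · rfl
    · have := hM.sign_mul_ocfEval_pos
      rw [← h] at this; simp [ocfEval] at this
  | cons p t ih =>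
    obtain ⟨e, a⟩ := p
    rcases M with _ | ⟨⟨f, b⟩, u⟩
    · have := hL.sign_mul_ocfEval_pos
      rw [h] at this; simp [ocfEval] at this
    have hef : e = f := by
      have h1 := hL.sign_mul_ocfEval_pos
      have h2 := hM.sign_mul_ocfEval_pos
      rw [h] at h1
      rcases hL.head.1 with rfl | rfl <;> rcases hM.head.1 with rfl | rfl <;>
        first | rfl | (push_cast at h1 h2; linarith)
    subst hef
    have hpos_t := hL.one_le_add_ocfEval.1
    have hpos_u := hM.one_le_add_ocfEval.1
    have he : (e : ℚ) ≠ 0 := by rcases hL.head.1 with rfl | rfl <;> norm_num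
    have hsum : (a : ℚ) + ocfEval t = b + ocfEval u := by
      simp only [ocfEval] at h
      rw [div_eq_div_iff (by linarith) (by linarith)] at h
      exact mul_left_cancel₀ he (by linarith)
    have ht := hL.tail.ocfEval_mem_Ioc
    have hu := hM.tail.ocfEval_mem_Ioc
    -- `a - b = ocfEval u - ocfEval t ∈ (-2, 2)` and `a, b` are odd
    have hab : a = b := by
      have h1 : ((a - b : ℤ) : ℚ) < 2 := by push_cast; linarith [ht.1, hu.2]
      have h2 : (-2 : ℚ) < ((a - b : ℤ) : ℚ) := by push_cast; linarith [ht.2, hu.1]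
      have h1' : (a - b : ℤ) < 2 := by exact_mod_cast h1
      have h2' : -2 < (a - b : ℤ) := by exact_mod_cast h2
      obtain ⟨k, rfl⟩ := hL.head.2.1
      obtain ⟨m, rfl⟩ := hM.head.2.1
      omega
    subst hab
    rw [ih hL.tail hM.tail (by linarith)]

@[simp]
theorem qsum_nil : qsum [] = 0 := rfl

@[simp]
theorem qsum_cons (p : ℤ × ℕ) (L : List (ℤ × ℕ)) : qsum (p :: L) = p.2 + qsum L := by
  simp [qsum]

@[simp]
theorem qsum_append (L M : List (ℤ × ℕ)) : qsum (L ++ M) = qsum L + qsum M := by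
  simp [qsum]

theorem ZeroRep.Szero_eq {x : ℚ} {L : List (ℤ × ℕ)} (h : ZeroRep x L) : Szero x = qsum L := by
  have hset : {M | ZeroRep x M} = {L} := by
    ext M
    refine ⟨fun hM => ?_, fun hM => hM ▸ h⟩
    exact hM.1.eq_of_ocfEval_eq h.1 (hM.2.2 ▸ h.2.2)
  rw [Szero, hset, Set.image_singleton, csInf_singleton]

theorem ZeroRep.splice {ξ : ℚ} {L M N : List (ℤ × ℕ)} {e : ℤ} {a b : ℕ}
    (h : ZeroRep ξ (L ++ (e, a) :: M)) (h' : ocfValid ((e, b) :: N)) :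
    ZeroRep (ocfEval (L ++ (e, b) :: N)) (L ++ (e, b) :: N) := by
  refine ⟨h.1.splice h', fun f c t ht => ?_, rfl⟩
  rcases L with _ | ⟨p, L⟩ <;> obtain ⟨hp, -⟩ := List.cons.inj ht
  · obtain ⟨rfl, -⟩ := Prod.mk.inj hp
    exact h.2.1 e a M rfl
  · exact h.2.1 f c _ (by rw [← hp]; rfl)

theorem ZeroRep.append_one_one {ξ : ℚ} {L : List (ℤ × ℕ)} {e : ℤ} {a : ℕ}
    (h : ZeroRep ξ (L ++ [(e, a)])) :
    ZeroRep (ocfEval (L ++ [(e, a)] ++ [(1, 1)])) (L ++ [(e, a)] ++ [(1, 1)]) := by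
  obtain ⟨he, ha_odd, ha⟩ := h.1.of_append.head
  have h' : ocfValid [(e, a), (1, 1)] := ⟨he, ha_odd, ha, by omega, ocfValid_one_one⟩
  simpa using h.splice h'

theorem ZeroRep.append_neg_one_one_one {ξ : ℚ} {L : List (ℤ × ℕ)} {e : ℤ} {a : ℕ}
    (h : ZeroRep ξ (L ++ [(e, a)])) (ha1 : 1 < a) :
    ZeroRep (ocfEval (L ++ [(e, a)] ++ [(-1, 1), (1, 1)])) (L ++ [(e, a)] ++ [(-1, 1), (1, 1)]) := by
  obtain ⟨he, ⟨k, rfl⟩, ha⟩ := h.1.of_append.head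
  have h' : ocfValid [(e, 2 * k + 1), (-1, 1), (1, 1)] :=
    ⟨he, ⟨k, rfl⟩, ha, by omega, Or.inr rfl, odd_one, one_pos, le_refl _, ocfValid_one_one⟩
  simpa using h.splice h'

theorem ZeroRep.add_two {ξ : ℚ} {L : List (ℤ × ℕ)} {e : ℤ} {a : ℕ}
    (h : ZeroRep ξ (L ++ [(e, a)] ++ [(1, 1)])) :
    ZeroRep (ocfEval (L ++ [(e, a + 2)])) (L ++ [(e, a + 2)]) := by
  rw [List.append_assoc, List.singleton_append] at h
  obtain ⟨he, ha_odd, ha⟩ := h.1.of_append.head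
  exact h.splice ⟨he, ha_odd.add_even even_two, by omega, by omega⟩

def ocfMatrix (L : List (ℤ × ℕ)) : Matrix (Fin 2) (Fin 2) ℤ :=
  (L.map fun p => !![0, p.1; 1, (p.2 : ℤ)]).prod

@[simp]
theorem ocfMatrix_nil : ocfMatrix [] = 1 := rfl

theorem ocfMatrix_cons (e : ℤ) (a : ℕ) (t : List (ℤ × ℕ)) :
    ocfMatrix ((e, a) :: t) = !![0, e; 1, (a : ℤ)] * ocfMatrix t := rfl

@[simp]
theorem ocfMatrix_cons_zero (e : ℤ) (a : ℕ) (t : List (ℤ × ℕ)) (j : Fin 2) :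
    ocfMatrix ((e, a) :: t) 0 j = e * ocfMatrix t 1 j := by
  simp [ocfMatrix_cons, Matrix.mul_apply]

@[simp]
theorem ocfMatrix_cons_one (e : ℤ) (a : ℕ) (t : List (ℤ × ℕ)) (j : Fin 2) :
    ocfMatrix ((e, a) :: t) 1 j = ocfMatrix t 0 j + a * ocfMatrix t 1 j := by
  simp [ocfMatrix_cons, Matrix.mul_apply]

theorem ocfMatrix_append_apply (L M : List (ℤ × ℕ)) (i j : Fin 2) :
    ocfMatrix (L ++ M) i j =
      ocfMatrix L i 0 * ocfMatrix M 0 j + ocfMatrix L i 1 * ocfMatrix M 1 j := by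
  simp [ocfMatrix, Matrix.mul_apply]

theorem ocfMatrix_cons_cons_one (e f : ℤ) (a b : ℕ) (t : List (ℤ × ℕ)) (j : Fin 2) :
    ocfMatrix ((e, a) :: (f, b) :: t) 1 j =
      a * ocfMatrix ((f, b) :: t) 1 j + f * ocfMatrix t 1 j := by
  rw [ocfMatrix_cons_one, ocfMatrix_cons_zero, add_comm]

theorem ocfValid.det_ocfMatrix {L : List (ℤ × ℕ)} (h : ocfValid L) :
    (ocfMatrix L).det = 1 ∨ (ocfMatrix L).det = -1 := by
  induction L with
  | nil => simp
  | cons p t ih =>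
    obtain ⟨e, a⟩ := p
    rw [ocfMatrix_cons, Matrix.det_mul, Matrix.det_fin_two_of]
    rcases h.head.1 with rfl | rfl <;> rcases ih h.tail with h' | h' <;> simp [h']

def InDenCone (C D : ℤ) : Prop := 0 ≤ C ∧ C ≤ D

/-- The second row `r` of `ocfMatrix` satisfies `r L = a • r t + f • r t.tail` for
`L = (e, a) :: t` with `t = (f, b) :: _`; when `f = -1` the link condition gives `a ≥ 3`, so
`r L - r t = (a - 2) • r t + (r t - r t.tail)` stays in the cone. -/
theorem ocfValid.inDenCone_ocfMatrix {L : List (ℤ × ℕ)} (h : ocfValid L) :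
    InDenCone (ocfMatrix L 1 0) (ocfMatrix L 1 1) ∧
    InDenCone (ocfMatrix L.tail 1 0) (ocfMatrix L.tail 1 1) ∧
    (L ≠ [(1, 1)] → InDenCone (ocfMatrix L 1 0 - ocfMatrix L.tail 1 0)
      (ocfMatrix L 1 1 - ocfMatrix L.tail 1 1)) := by
  induction L with
  | nil => simp [InDenCone]
  | cons p t ih =>
    obtain ⟨e, a⟩ := p
    obtain ⟨-, -, ha⟩ := h.head
    have ha1 : (1 : ℤ) ≤ a := by exact_mod_cast ha
    rcases t with _ | ⟨⟨f, b⟩, t⟩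
    · have hlast : a = 1 → e = 1 := h.2.2.2
      simp only [InDenCone, List.tail_cons, ocfMatrix_cons_one, ocfMatrix_nil,
        Matrix.one_apply_eq, Matrix.one_apply_ne one_ne_zero, Matrix.one_apply_ne zero_ne_one]
      refine ⟨by omega, by omega, fun hne => ⟨by omega, ?_⟩⟩
      have : a ≠ 1 := fun ha => hne (by rw [ha, hlast ha])
      omega
    · obtain ⟨⟨hC0, hCD⟩, ⟨hc0, hcd⟩, hmono⟩ := ih h.tail
      simp only [List.tail_cons, InDenCone] at *
      rw [ocfMatrix_cons_cons_one, ocfMatrix_cons_cons_one]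
      have hlink : 2 ≤ (a : ℤ) + f := h.2.2.2.1
      rcases h.tail.head.1 with rfl | rfl
      · refine ⟨⟨by nlinarith, by nlinarith⟩, ⟨hC0, hCD⟩, fun _ => ⟨by nlinarith, by nlinarith⟩⟩
      · obtain ⟨hm0, hm1⟩ := hmono (by simp)
        refine ⟨⟨by nlinarith, by nlinarith⟩, ⟨hC0, hCD⟩, fun _ => ⟨by nlinarith, by nlinarith⟩⟩

theorem ocfValid.ocfMatrix_one_one_pos {L : List (ℤ × ℕ)} (h : ocfValid L) :
    0 < ocfMatrix L 1 1 := by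
  obtain ⟨⟨hC, hCD⟩, -⟩ := h.inDenCone_ocfMatrix
  have hdet := h.det_ocfMatrix
  rw [Matrix.det_fin_two] at hdet
  by_contra! hD
  obtain ⟨hC0, hD0⟩ : ocfMatrix L 1 0 = 0 ∧ ocfMatrix L 1 1 = 0 := ⟨by omega, by omega⟩
  rw [hC0, hD0] at hdet
  simp at hdet

theorem ocfValid.ocfMatrix_one_zero_mem_Ioo {L : List (ℤ × ℕ)} (h : ocfValid L)
    (hD : 1 < ocfMatrix L 1 1) : ocfMatrix L 1 0 ∈ Set.Ioo 0 (ocfMatrix L 1 1) := by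
  obtain ⟨⟨hC, hCD⟩, -⟩ := h.inDenCone_ocfMatrix
  have hdet := h.det_ocfMatrix
  rw [Matrix.det_fin_two] at hdet
  set M := ocfMatrix L
  -- at `C = 0` or `C = D` the denominator `D` would divide the determinant `±1`
  have key : M 1 0 = 0 ∨ M 1 0 = M 1 1 → M 1 1 ∣ 1 := by
    intro hdeg
    have hdvd : M 1 1 ∣ M 0 0 * M 1 1 - M 0 1 * M 1 0 := by
      rcases hdeg with h0 | h0 <;> rw [h0]
      exacts [⟨M 0 0, by ring⟩, ⟨M 0 0 - M 0 1, by ring⟩]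
    rcases hdet with h1 | h1 <;> rw [h1] at hdvd
    exacts [hdvd, dvd_neg.mp hdvd]
  refine ⟨hC.lt_of_ne fun h0 => ?_, hCD.lt_of_ne fun h0 => ?_⟩
  · exact absurd (Int.le_of_dvd one_pos (key (Or.inl h0.symm))) hD.not_ge
  · exact absurd (Int.le_of_dvd one_pos (key (Or.inr h0))) hD.not_ge

theorem ocfValid.ocfEval_eq {L : List (ℤ × ℕ)} (h : ocfValid L) :
    ocfEval L = ocfMatrix L 0 1 / ocfMatrix L 1 1 := by
  induction L with
  | nil => simp [ocfEval]
  | cons p t ih =>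
    obtain ⟨e, a⟩ := p
    have hD : (ocfMatrix t 1 1 : ℚ) ≠ 0 := by exact_mod_cast h.tail.ocfMatrix_one_one_pos.ne'
    simp only [ocfEval, ih h.tail, ocfMatrix_cons_zero, ocfMatrix_cons_one]
    push_cast
    field_simp
    ring

theorem ocfEval_append_one_one {L : List (ℤ × ℕ)} (h : ocfValid (L ++ [(1, 1)])) :
    ocfEval (L ++ [(1, 1)]) =
      ((ocfMatrix L 0 0 + ocfMatrix L 0 1) / (ocfMatrix L 1 0 + ocfMatrix L 1 1) : ℚ) := by
  simp [h.ocfEval_eq, ocfMatrix_append_apply]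

theorem ocfEval_append_neg_one_one_one {L : List (ℤ × ℕ)}
    (h : ocfValid (L ++ [(-1, 1), (1, 1)])) :
    ocfEval (L ++ [(-1, 1), (1, 1)]) =
      ((2 * ocfMatrix L 0 1 - ocfMatrix L 0 0) / (2 * ocfMatrix L 1 1 - ocfMatrix L 1 0) : ℚ) := by
  simp only [h.ocfEval_eq, ocfMatrix_append_apply, ocfMatrix_cons_zero, ocfMatrix_cons_one,
    ocfMatrix_nil, Matrix.one_apply_eq, Matrix.one_apply_ne zero_ne_one]
  push_cast
  ring_nf

theorem ocfEval_append_add_two {L : List (ℤ × ℕ)} {e : ℤ} {a : ℕ}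
    (h : ocfValid (L ++ [(e, a + 2)])) :
    ocfEval (L ++ [(e, a + 2)]) =
      ((2 * ocfMatrix (L ++ [(e, a)] ++ [(1, 1)]) 0 1 - ocfMatrix (L ++ [(e, a)] ++ [(1, 1)]) 0 0) /
        (2 * ocfMatrix (L ++ [(e, a)] ++ [(1, 1)]) 1 1 -
          ocfMatrix (L ++ [(e, a)] ++ [(1, 1)]) 1 0) : ℚ) := by
  simp only [h.ocfEval_eq, ocfMatrix_append_apply, ocfMatrix_cons_zero, ocfMatrix_cons_one,
    ocfMatrix_nil, Matrix.one_apply_eq, Matrix.one_apply_ne zero_ne_one,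
    Matrix.one_apply_ne one_ne_zero]
  push_cast
  ring_nf

theorem num_den_div_of_isCoprime {p q : ℤ} (hq : 0 < q) (h : IsCoprime p q) :
    (p / q : ℚ).num = p ∧ ((p / q : ℚ).den : ℤ) = q := by
  have h' := Int.isCoprime_iff_gcd_eq_one.mp h
  exact ⟨Rat.num_div_eq_of_coprime hq h', Rat.den_div_eq_of_coprime hq h'⟩

theorem one_lt_den_of_pos_of_lt_one {q : ℚ} (h0 : 0 < q) (h1 : q < 1) : 1 < q.den := by
  by_contra! h
  have hq := Rat.coe_int_num_of_den_eq_one (le_antisymm h q.pos)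
  have : 0 < q.num := Rat.num_pos.mpr h0
  have : q.num < 1 := by rw [← hq] at h1; exact_mod_cast h1
  omega

theorem mediant_comm (x y : ℚ) : mediant x y = mediant y x := by
  rw [mediant, mediant, add_comm x.num, add_comm x.den]

theorem mediant_div_div {p q r s : ℤ} (hq : 0 < q) (hs : 0 < s) (hpq : IsCoprime p q)
    (hrs : IsCoprime r s) : mediant (p / q) (r / s) = (p + r) / (q + s) := by
  obtain ⟨hp, hq'⟩ := num_den_div_of_isCoprime hq hpq
  obtain ⟨hr, hs'⟩ := num_den_div_of_isCoprime hs hrs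
  have hq'' : ((p / q : ℚ).den : ℚ) = q := by exact_mod_cast hq'
  have hs'' : ((r / s : ℚ).den : ℚ) = s := by exact_mod_cast hs'
  rw [mediant, hp, hr]
  push_cast
  rw [hq'', hs'']

theorem lt_mediant {x y : ℚ} (h : x < y) : x < mediant x y := by
  have h' : (x.num : ℚ) * y.den < y.num * x.den := by exact_mod_cast (Rat.lt_iff _ _).mp h
  nth_rewrite 1 [← Rat.num_div_den x]
  rw [mediant, div_lt_div_iff₀ (by positivity) (by positivity)]
  push_cast
  linarith

theorem mediant_lt {x y : ℚ} (h : x < y) : mediant x y < y := by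
  have h' : (x.num : ℚ) * y.den < y.num * x.den := by exact_mod_cast (Rat.lt_iff _ _).mp h
  nth_rewrite 2 [← Rat.num_div_den y]
  rw [mediant, div_lt_div_iff₀ (by positivity) (by positivity)]
  push_cast
  linarith

def FareyNeighbors (x y : ℚ) : Prop := y.num * x.den - x.num * y.den = 1

theorem FareyNeighbors.of_div {p q r s : ℤ} (hq : 0 < q) (hs : 0 < s) (h : r * q - p * s = 1) :
    FareyNeighbors (p / q) (r / s) := by
  obtain ⟨hp, hq'⟩ := num_den_div_of_isCoprime (p := p) hq ⟨-s, r, by linarith⟩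
  obtain ⟨hr, hs'⟩ := num_den_div_of_isCoprime (p := r) hs ⟨q, -p, by linarith⟩
  rw [FareyNeighbors, hp, hq', hr, hs', h]

theorem FareyNeighbors.num_den_mediant {x y : ℚ} (h : FareyNeighbors x y) :
    (mediant x y).num = x.num + y.num ∧ ((mediant x y).den : ℤ) = x.den + y.den := by
  have := num_den_div_of_isCoprime (p := x.num + y.num) (q := x.den + y.den) (by positivity)
    ⟨x.den, -x.num, by unfold FareyNeighbors at h; linarith⟩
  simpa [mediant] using this

theorem FareyNeighbors.mediant_left {x y : ℚ} (h : FareyNeighbors x y) :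
    FareyNeighbors x (mediant x y) := by
  obtain ⟨hn, hd⟩ := h.num_den_mediant
  unfold FareyNeighbors at h ⊢
  rw [hn, hd]; linarith

theorem FareyNeighbors.mediant_right {x y : ℚ} (h : FareyNeighbors x y) :
    FareyNeighbors (mediant x y) y := by
  obtain ⟨hn, hd⟩ := h.num_den_mediant
  unfold FareyNeighbors at h ⊢
  rw [hn, hd]; linarith

/-- `y` is the solution `(c, d)` of `c ⋅ ξ.den - ξ.num ⋅ d = 1` with `0 < d < ξ.den`, and
`x = ξ ⊖ y`. -/
theorem FareyNeighbors.eq_of_mediant_eq {x y x' y' : ℚ} (h : FareyNeighbors x y)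
    (h' : FareyNeighbors x' y') (he : mediant x y = mediant x' y') : x = x' ∧ y = y' := by
  obtain ⟨hn, hd⟩ := h.num_den_mediant
  obtain ⟨hn', hd'⟩ := h'.num_den_mediant
  set ξ := mediant x y
  rw [← he] at hn' hd'
  unfold FareyNeighbors at h h'
  have hdvd : (ξ.den : ℤ) ∣ y.den - y'.den := by
    have hcop : IsCoprime (ξ.den : ℤ) ξ.num := by
      rw [Int.isCoprime_iff_gcd_eq_one, Int.gcd_comm]; exact ξ.reduced
    refine hcop.dvd_of_dvd_mul_left ⟨y.num - y'.num, ?_⟩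
    linear_combination (-1 : ℤ) * h - y.num * hd + y.den * hn + h' + y'.num * hd' - y'.den * hn'
  have hyd : (y.den : ℤ) = y'.den := by
    have := Int.eq_zero_of_abs_lt_dvd hdvd (by
      rw [abs_lt]; have := x.pos; have := x'.pos; constructor <;> omega)
    omega
  have hyn : y.num = y'.num := by
    have hD : (ξ.den : ℤ) ≠ 0 := by positivity
    apply mul_left_cancel₀ hD
    linear_combination h + y.num * hd - y.den * hn - h' - y'.num * hd' + y'.den * hn'
      + ξ.num * hyd
  have hxd : (x.den : ℤ) = x'.den := by linarith
  exact ⟨Rat.ext (by linarith) (by exact_mod_cast hxd), Rat.ext hyn (by exact_mod_cast hyd)⟩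

/-- The parents of `B / D` are `A / C` and `(B - A) / (D - C)`. -/
theorem FareyNeighbors.successors_eq {A B C D : ℤ}
    (hdet : A * D - B * C = 1 ∨ A * D - B * C = -1) (hC : 0 < C) (hCD : C < D) {x y : ℚ}
    (hxy : FareyNeighbors x y) (hξ : mediant x y = B / D) :
    ({mediant x (B / D), mediant (B / D) y} : Set ℚ) =
      {((A + B) / (C + D) : ℚ), ((2 * B - A) / (2 * D - C) : ℚ)} := by
  have hD : 0 < D := hC.trans hCD
  have hDC : 0 < D - C := sub_pos.mpr hCD
  have hcop : IsCoprime A C ∧ IsCoprime B D ∧ IsCoprime (B - A) (D - C) := by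
    rcases hdet with h | h
    · exact ⟨⟨D, -B, by linarith⟩, ⟨-C, A, by linarith⟩, ⟨-C, A, by linarith⟩⟩
    · exact ⟨⟨-D, B, by linarith⟩, ⟨C, -A, by linarith⟩, ⟨C, -A, by linarith⟩⟩
  obtain ⟨hAC, hBD, hW⟩ := hcop
  have hparents : mediant (A / C) ((B - A : ℤ) / (D - C : ℤ)) = B / D := by
    rw [mediant_div_div hC hDC hAC hW]; push_cast; ring_nf
  have hleft : mediant (A / C) (B / D) = (A + B) / (C + D) := mediant_div_div hC hD hAC hBD
  have hright : mediant (B / D) ((B - A : ℤ) / (D - C : ℤ)) = (2 * B - A) / (2 * D - C) := by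
    rw [mediant_div_div hD hDC hBD hW]; push_cast; ring_nf
  rcases hdet with h | h
  · obtain ⟨rfl, rfl⟩ := hxy.eq_of_mediant_eq
      (FareyNeighbors.of_div (p := B - A) (r := A) hDC hC (by linarith))
      (by rw [hξ, mediant_comm, hparents])
    rw [mediant_comm, hright, mediant_comm, hleft, Set.pair_comm]
  · obtain ⟨rfl, rfl⟩ := hxy.eq_of_mediant_eq
      (FareyNeighbors.of_div (p := A) (r := B - A) hC hDC (by linarith))
      (by rw [hξ, hparents])
    rw [hleft, hright]

theorem ocfValid.successors_eq {L : List (ℤ × ℕ)} (hL : ocfValid L) {x y : ℚ}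
    (hxy : FareyNeighbors x y) (hξ : mediant x y = ocfEval L) (hξ0 : 0 < ocfEval L)
    (hξ1 : ocfEval L < 1) :
    ({mediant x (ocfEval L), mediant (ocfEval L) y} : Set ℚ) =
      {((ocfMatrix L 0 0 + ocfMatrix L 0 1) / (ocfMatrix L 1 0 + ocfMatrix L 1 1) : ℚ),
        ((2 * ocfMatrix L 0 1 - ocfMatrix L 0 0) / (2 * ocfMatrix L 1 1 - ocfMatrix L 1 0) : ℚ)} := by
  have hdet := hL.det_ocfMatrix
  rw [Matrix.det_fin_two] at hdet
  have hBD : IsCoprime (ocfMatrix L 0 1) (ocfMatrix L 1 1) := by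
    rcases hdet with h | h
    exacts [⟨-ocfMatrix L 1 0, ocfMatrix L 0 0, by linarith⟩,
      ⟨ocfMatrix L 1 0, -ocfMatrix L 0 0, by linarith⟩]
  have hden : ((ocfEval L).den : ℤ) = ocfMatrix L 1 1 := by
    rw [hL.ocfEval_eq]; exact (num_den_div_of_isCoprime hL.ocfMatrix_one_one_pos hBD).2
  have hD : 1 < ocfMatrix L 1 1 := by
    rw [← hden]; exact_mod_cast one_lt_den_of_pos_of_lt_one hξ0 hξ1
  obtain ⟨hC, hCD⟩ := hL.ocfMatrix_one_zero_mem_Ioo hD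
  rw [hL.ocfEval_eq] at hξ ⊢
  exact hxy.successors_eq hdet hC hCD hξ

theorem SB_subset_succ (n : ℕ) : SB n ⊆ SB (n + 1) := fun _ h => Or.inl h

theorem SBConsecutive.mediant_mem {n : ℕ} {x y : ℚ} (h : SBConsecutive n x y) :
    mediant x y ∈ SB (n + 1) :=
  Or.inr ⟨x, y, h.1, h.2.1, h.2.2.1, h.2.2.2, rfl⟩

/-- Two old points would have their mediant between them; two new points would come from the
same consecutive pair of `𝔉_n`. -/
theorem SBConsecutive.exists_of_succ {n : ℕ} {x y : ℚ} (h : SBConsecutive (n + 1) x y) :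
    ∃ p q, SBConsecutive n p q ∧ (x = p ∧ y = mediant p q ∨ x = mediant p q ∧ y = q) := by
  obtain ⟨hx, hy, hxy, hgap⟩ := h
  have hold : ∀ {t}, t ∈ SB n → t ≤ x ∨ y ≤ t := fun ht => hgap _ (SB_subset_succ n ht)
  rcases hx with hx | ⟨p, q, hp, hq, hpq, hpqgap, rfl⟩ <;>
    rcases hy with hy | ⟨p', q', hp', hq', hpq', hpqgap', rfl⟩
  · have hc : SBConsecutive n x y := ⟨hx, hy, hxy, fun t ht => hold ht⟩
    have := lt_mediant hxy
    have := mediant_lt hxy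
    rcases hgap _ hc.mediant_mem with h | h <;> linarith
  · have := lt_mediant hpq'
    have := mediant_lt hpq'
    refine ⟨p', q', ⟨hp', hq', hpq', hpqgap'⟩, Or.inl ⟨?_, rfl⟩⟩
    rcases hold hp' with h1 | h1 <;> rcases hpqgap' x hx with h2 | h2 <;>
      first | exact le_antisymm h2 h1 | (exfalso; linarith)
  · have := lt_mediant hpq
    have := mediant_lt hpq
    refine ⟨p, q, ⟨hp, hq, hpq, hpqgap⟩, Or.inr ⟨rfl, ?_⟩⟩
    rcases hold hq with h1 | h1 <;> rcases hpqgap y hy with h2 | h2 <;>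
      first | exact le_antisymm h1 h2 | (exfalso; linarith)
  · have := lt_mediant hpq
    have := mediant_lt hpq
    have := lt_mediant hpq'
    have := mediant_lt hpq'
    have hpp : p = p' := by
      rcases hold hp' with h1 | h1 <;> rcases hpqgap p' hp' with h2 | h2 <;>
        rcases hpqgap' p hp with h3 | h3 <;>
        first | exact le_antisymm h3 h2 | (exfalso; linarith)
    have hqq : q = q' := by
      rcases hold hq with h1 | h1 <;> rcases hpqgap q' hq' with h2 | h2 <;>
        rcases hpqgap' q hq with h3 | h3 <;>
        first | exact le_antisymm h2 h3 | (exfalso; linarith)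
    subst hpp hqq
    exact absurd hxy (lt_irrefl _)

theorem SBConsecutive.fareyNeighbors {n : ℕ} {x y : ℚ} (h : SBConsecutive n x y) :
    FareyNeighbors x y := by
  induction n generalizing x y with
  | zero =>
    obtain ⟨hx, hy, hxy, -⟩ := h
    simp only [SB, Set.mem_insert_iff, Set.mem_singleton_iff] at hx hy
    rcases hx with rfl | rfl <;> rcases hy with rfl | rfl <;> norm_num [FareyNeighbors] at *
  | succ n ih =>
    obtain ⟨p, q, hpq, ⟨rfl, rfl⟩ | ⟨rfl, rfl⟩⟩ := h.exists_of_succ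
    exacts [(ih hpq).mediant_left, (ih hpq).mediant_right]

theorem apply_pair_eq_pair {α β : Type*} (f : α → β) {p q c d : α}
    (h : ({p, q} : Set α) = {c, d}) : f p = f c ∧ f q = f d ∨ f p = f d ∧ f q = f c := by
  rcases Set.pair_eq_pair_iff.mp h with ⟨rfl, rfl⟩ | ⟨rfl, rfl⟩
  exacts [Or.inl ⟨rfl, rfl⟩, Or.inr ⟨rfl, rfl⟩]

/-- **Proposition 4.** Let `ξ = [0; ε₁/a₁, …, ε_l/a_l]` be a rational in `(0,1)`,
written as the mediant `ξ = x ⊕ y` of two consecutive elements `x < y` of a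
Stern–Brocot sequence `𝔉_n`, and let `ξ^l = x ⊕ ξ`, `ξ^r = ξ ⊕ y` be its successors.
If `a_l = 1` then both successors increase `S⁰` by `1` and
`{ξ^l, ξ^r} = {[0; …, ε_{l−1}/(a_{l−1}+2)], [0; …, ε_l/a_l, 1/1]}` (node of first
type); if `a_l > 1` then one successor increases `S⁰` by `1` and the other by `2`, and
`{ξ^l, ξ^r} = {[0; …, ε_l/a_l, 1/1], [0; …, ε_l/a_l, −1/1, 1/1]}` (node of second
type). -/
theorem thm13 (n : ℕ) (x y : ℚ) (hxy : SBConsecutive n x y)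
    (ξ : ℚ) (hξ : ξ = mediant x y) (hξ0 : 0 < ξ) (hξ1 : ξ < 1)
    (L L₀ : List (ℤ × ℕ)) (e : ℤ) (a : ℕ)
    (hL : ZeroRep ξ L) (hsplit : L = L₀ ++ [(e, a)]) :
    (a = 1 →
      Szero (mediant x ξ) = Szero ξ + 1 ∧ Szero (mediant ξ y) = Szero ξ + 1 ∧
      ∃ (L₁ : List (ℤ × ℕ)) (e' : ℤ) (a' : ℕ), L₀ = L₁ ++ [(e', a')] ∧
        ({mediant x ξ, mediant ξ y} : Set ℚ) =
          {ocfEval (L₁ ++ [(e', a' + 2)]), ocfEval (L ++ [(1, 1)])}) ∧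
    (1 < a →
      ((Szero (mediant x ξ) = Szero ξ + 1 ∧ Szero (mediant ξ y) = Szero ξ + 2) ∨
       (Szero (mediant x ξ) = Szero ξ + 2 ∧ Szero (mediant ξ y) = Szero ξ + 1)) ∧
      ({mediant x ξ, mediant ξ y} : Set ℚ) =
        {ocfEval (L ++ [(1, 1)]), ocfEval (L ++ [(-1, 1), (1, 1)])}) := by
  obtain rfl : ξ = ocfEval L := hL.2.2
  have hsucc := hL.1.successors_eq hxy.fareyNeighbors hξ.symm hξ0 hξ1
  rw [hL.Szero_eq]
  subst hsplit
  have hc₁ := hL.append_one_one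
  rw [← ocfEval_append_one_one hc₁.1] at hsucc
  constructor
  · rintro rfl
    obtain rfl : e = 1 := hL.1.of_append.2.2.2 rfl
    obtain ⟨L₁, ⟨e', a'⟩, rfl⟩ := L₀.eq_nil_or_concat'.resolve_left <| by
      rintro rfl
      norm_num [ocfEval] at hξ1
    have hc₂ := hL.add_two
    rw [← ocfEval_append_add_two hc₂.1] at hsucc
    have hS := apply_pair_eq_pair Szero hsucc
    rw [hc₁.Szero_eq, hc₂.Szero_eq] at hS
    simp only [qsum_append, qsum_cons, qsum_nil] at hS ⊢
    exact ⟨by omega, by omega, L₁, e', a', rfl, hsucc.trans (Set.pair_comm _ _)⟩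
  · intro ha
    have hc₂ := hL.append_neg_one_one_one ha
    rw [← ocfEval_append_neg_one_one_one hc₂.1] at hsucc
    have hS := apply_pair_eq_pair Szero hsucc
    rw [hc₁.Szero_eq, hc₂.Szero_eq] at hS
    simp only [qsum_append, qsum_cons, qsum_nil] at hS ⊢
    exact ⟨by omega, hsucc⟩

end
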